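/- Let G be a connected loopless multigraph and let r ≥ 1 be an integer. Then for every integer k ≥ 1, dgon_r(G) ≤ 2·dgon_r(σ_k(G)) − r. -/

import Mathlib

/-! ## Loopless multigraphs, divisors, rank, gonality -/

/-- A finite loopless multigraph, given by a finite vertex set and a symmetric
edge-multiplicity function vanishing on the diagonal. -/
structure Multigraph where
  V : Type
  fintypeV : Fintype V
  decEqV : DecidableEq V
  m : V → V → ℕ
  symm : ∀ u v, m u v = m v u
  loopless : ∀ v, m v v = 0

attribute [instance] Multigraph.fintypeV Multigraph.decEqV

namespace Multigraph

variable (G : Multigraph)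

/-- A divisor on a multigraph. -/
abbrev Divisor := G.V → ℤ

/-- The degree of a divisor. -/
def deg (D : G.Divisor) : ℤ := ∑ v, D v

/-- A divisor is effective if it is nonnegative everywhere. -/
def Effective (D : G.Divisor) : Prop := ∀ v, 0 ≤ D v

/-- Principal divisors: images of the Laplacian. -/
def Principal (D : G.Divisor) : Prop :=
  ∃ x : G.V → ℤ, ∀ v, D v = ∑ u, (G.m v u : ℤ) * (x v - x u)

/-- Two divisors are (linearly) equivalent if their difference is principal. -/
def DEquiv (D D' : G.Divisor) : Prop := G.Principal (fun v => D v - D' v)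

/-- `RankGe G D k` means: for every effective divisor `E` of degree `k`,
`D - E` is equivalent to an effective divisor. -/
def RankGe (D : G.Divisor) (k : ℕ) : Prop :=
  ∀ E : G.Divisor, G.Effective E → G.deg E = (k : ℤ) →
    ∃ F : G.Divisor, G.Effective F ∧ G.DEquiv (fun v => D v - E v) F

open Classical in
/-- The rank of a divisor: the largest `k ≥ 0` such that `D - E` is equivalent to an
effective divisor for every effective divisor `E` of degree `k`; and `-1` if `D` itself
is not equivalent to an effective divisor. -/
noncomputable def rank (D : G.Divisor) : ℤ :=
  if G.RankGe D 0 then ((sSup {k : ℕ | G.RankGe D k} : ℕ) : ℤ) else -1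

/-- The divisorial gonality: the minimum degree of a divisor of rank at least 1. -/
noncomputable def dgon : ℤ :=
  sInf {d : ℤ | ∃ D : G.Divisor, 1 ≤ G.rank D ∧ G.deg D = d}

/-- The `r`-th divisorial gonality: the minimum degree of a divisor of rank at least `r`. -/
noncomputable def dgonr (r : ℕ) : ℤ :=
  sInf {d : ℤ | ∃ D : G.Divisor, (r : ℤ) ≤ G.rank D ∧ G.deg D = d}

/-- A divisor reaches a vertex `v` if some equivalent effective divisor is positive at `v`. -/
def Reaches (D : G.Divisor) (v : G.V) : Prop :=
  ∃ D' : G.Divisor, G.Effective D' ∧ G.DEquiv D D' ∧ 0 < D' v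

/-- A set `A` of vertices is valid with respect to `D` if every `v ∈ A` has at least as
many chips as edges leaving `A`. -/
def Valid (D : G.Divisor) (A : Finset G.V) : Prop :=
  ∀ v ∈ A, (∑ u ∈ Aᶜ, (G.m v u : ℤ)) ≤ D v

/-- A divisor is `q`-reduced if it is nonnegative away from `q` and every nonempty valid set
contains `q`. -/
def Reduced (D : G.Divisor) (q : G.V) : Prop :=
  (∀ v, v ≠ q → 0 ≤ D v) ∧ ∀ A : Finset G.V, G.Valid D A → A.Nonempty → q ∈ A

/-- Reachability within a set `W` of vertices, along edges of positive multiplicity. -/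
def ReachIn (W : Set G.V) (u v : G.V) : Prop :=
  Relation.ReflTransGen (fun a b => a ∈ W ∧ b ∈ W ∧ 0 < G.m a b) u v

/-- A multigraph is connected if it is nonempty and any two vertices are joined by a walk. -/
def Connected : Prop := Nonempty G.V ∧ ∀ u v : G.V, G.ReachIn Set.univ u v

/-- `C` is a connected component of the subgraph induced on `W`. -/
def IsCompOf (W C : Finset G.V) : Prop :=
  ∃ u ∈ W, ∀ v, v ∈ C ↔ G.ReachIn (↑W) u v

/-- The induced (multi)graph on `C` is a tree: it is connected and has `|C| - 1` edges
(counted with multiplicity). -/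
def IsTreeOn (C : Finset G.V) : Prop :=
  (∀ u ∈ C, ∀ v ∈ C, G.ReachIn (↑C) u v) ∧
    ∑ u ∈ C, ∑ v ∈ C, G.m u v = 2 * (C.card - 1)

/-- A strong separator: every connected component `C` of the complement induces a tree,
and every `s ∈ S` is joined to each such component by at most one edge. -/
def StrongSeparator (S : Finset G.V) : Prop :=
  ∀ C : Finset G.V, G.IsCompOf Sᶜ C →
    G.IsTreeOn C ∧ ∀ s ∈ S, ∑ v ∈ C, G.m s v ≤ 1

end Multigraph

/-- The number of (ordered) occurrences of `(x, y)` as a consecutive pair in a list. -/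
def adjCount {α : Type} [DecidableEq α] (x y : α) (l : List α) : ℕ :=
  (l.zip l.tail).count (x, y)

/-- A subdivision of the loopless multigraph `G`: every edge of `G` (with multiplicity)
is replaced by a path through fresh internal vertices, these paths being internally
disjoint and covering `H`. `path u v j` is the list of internal vertices of the path
replacing the `j`-th edge between `u` and `v`, in order from `u` to `v`. -/
structure Subdivision (G H : Multigraph) where
  emb : G.V → H.V
  inj : Function.Injective emb
  path : (u v : G.V) → Fin (G.m u v) → List H.V
  rev : ∀ u v (j : Fin (G.m u v)),
    path v u (Fin.cast (G.symm u v) j) = (path u v j).reverse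
  nodup : ∀ u v (j : Fin (G.m u v)), (path u v j).Nodup
  fresh : ∀ u v (j : Fin (G.m u v)), ∀ x ∈ path u v j, x ∉ Set.range emb
  disj : ∀ u v (j : Fin (G.m u v)) u' v' (j' : Fin (G.m u' v')) x,
    x ∈ path u v j → x ∈ path u' v' j' →
    (u = u' ∧ v = v' ∧ (j : ℕ) = (j' : ℕ)) ∨ (u = v' ∧ v = u' ∧ (j : ℕ) = (j' : ℕ))
  cover : ∀ x : H.V, x ∈ Set.range emb ∨ ∃ u, ∃ v, ∃ j : Fin (G.m u v), x ∈ path u v j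
  edges : ∀ x y : H.V,
    H.m x y = ∑ u, ∑ v, ∑ j : Fin (G.m u v),
      adjCount x y (emb u :: (path u v j ++ [emb v]))

/-- `H` is (isomorphic to) the `k`-th regular subdivision `σ_k(G)`: every edge of `G` is
replaced by a path with exactly `k` edges, i.e. `k - 1` internal vertices. -/
def IsRegularSubdivision (k : ℕ) (G H : Multigraph) : Prop :=
  ∃ S : Subdivision G H, ∀ u v (j : Fin (G.m u v)), (S.path u v j).length = k - 1
/-! ## Auxiliary lemmas -/

namespace Multigraph

variable {G : Multigraph}

lemma deg_sub_fun (D E : G.Divisor) : G.deg (fun v => D v - E v) = G.deg D - G.deg E :=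
  Finset.sum_sub_distrib D E

lemma principal_deg {D : G.Divisor} (h : G.Principal D) : G.deg D = 0 := by
  obtain ⟨x, hx⟩ := h
  unfold deg
  rw [Finset.sum_congr rfl fun v _ => hx v]
  have h2 : ∑ v, ∑ u, (G.m v u : ℤ) * (x v - x u)
      = - ∑ v, ∑ u, (G.m v u : ℤ) * (x v - x u) := by
    nth_rewrite 1 [Finset.sum_comm]
    rw [← Finset.sum_neg_distrib]
    refine Finset.sum_congr rfl fun v _ => ?_
    rw [← Finset.sum_neg_distrib]
    refine Finset.sum_congr rfl fun u _ => ?_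
    rw [G.symm]; ring
  linarith

lemma dequiv_deg {D D' : G.Divisor} (h : G.DEquiv D D') : G.deg D = G.deg D' := by
  have := principal_deg h
  rw [deg_sub_fun] at this
  linarith

lemma dequiv_refl (D : G.Divisor) : G.DEquiv D D :=
  ⟨0, fun v => by simp⟩

lemma dequiv_trans {D D' D'' : G.Divisor} (h1 : G.DEquiv D D') (h2 : G.DEquiv D' D'') :
    G.DEquiv D D'' := by
  obtain ⟨x, hx⟩ := h1
  obtain ⟨y, hy⟩ := h2
  refine ⟨fun v => x v + y v, fun v => ?_⟩
  have e1 := hx v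
  have e2 := hy v
  have : ∑ u, (G.m v u : ℤ) * ((fun v => x v + y v) v - (fun v => x v + y v) u)
      = ∑ u, (G.m v u : ℤ) * (x v - x u) + ∑ u, (G.m v u : ℤ) * (y v - y u) := by
    rw [← Finset.sum_add_distrib]
    refine Finset.sum_congr rfl fun u _ => ?_
    simp only []
    ring
  rw [this, ← e1, ← e2]
  ring

lemma rankGe_congr {D D' : G.Divisor} {k : ℕ} (h : G.DEquiv D D') (hr : G.RankGe D k) :
    G.RankGe D' k := by
  intro E hE hdeg
  obtain ⟨F, hF, hFe⟩ := hr E hE hdeg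
  refine ⟨F, hF, ?_⟩
  obtain ⟨x, hx⟩ := h
  refine dequiv_trans ⟨fun v => - x v, fun v => ?_⟩ hFe
  have : ∑ u, (G.m v u : ℤ) * ((fun v => -x v) v - (fun v => -x v) u)
      = - ∑ u, (G.m v u : ℤ) * (x v - x u) := by
    rw [← Finset.sum_neg_distrib]
    refine Finset.sum_congr rfl fun u _ => ?_
    simp only []
    ring
  rw [this, ← hx v]
  ring

lemma rankGe_anti (v0 : G.V) {D : G.Divisor} {k j : ℕ} (h : G.RankGe D k) (hjk : j ≤ k) :
    G.RankGe D j := by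
  intro E hE hdeg
  have hjk' : (j : ℤ) ≤ (k : ℤ) := by exact_mod_cast hjk
  set c : G.Divisor := fun v => if v = v0 then ((k : ℤ) - j) else 0 with hc
  have hcv : ∀ v, 0 ≤ c v := by
    intro v
    simp only [hc]
    split <;> simp <;> linarith
  have hcd : G.deg c = (k : ℤ) - j := by
    unfold deg
    simp only [hc]
    rw [Finset.sum_ite_eq' Finset.univ v0 (fun _ => ((k : ℤ) - j))]
    simp
  have hE' : G.Effective (fun v => E v + c v) := fun v => by
    have := hE v; have := hcv v; dsimp only; linarith
  have hdeg' : G.deg (fun v => E v + c v) = (k : ℤ) := by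
    unfold deg
    rw [Finset.sum_add_distrib]
    have : ∑ v, E v = (j : ℤ) := hdeg
    rw [this]
    have : ∑ v, c v = (k : ℤ) - j := hcd
    rw [this]; ring
  obtain ⟨F, hF, hFe⟩ := h (fun v => E v + c v) hE' hdeg'
  refine ⟨fun v => F v + c v, fun v => by have := hF v; have := hcv v; dsimp only; linarith, ?_⟩
  obtain ⟨x, hx⟩ := hFe
  refine ⟨x, fun v => ?_⟩
  have := hx v
  simp only [] at this ⊢
  linarith [this]

lemma rankGe_deg (v0 : G.V) {D : G.Divisor} {k : ℕ} (h : G.RankGe D k) :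
    (k : ℤ) ≤ G.deg D := by
  set E : G.Divisor := fun v => if v = v0 then (k : ℤ) else 0 with hEdef
  have hE : G.Effective E := fun v => by
    simp only [hEdef]; split <;> simp
  have hdeg : G.deg E = (k : ℤ) := by
    unfold deg
    simp only [hEdef]
    rw [Finset.sum_ite_eq' Finset.univ v0 (fun _ => (k : ℤ))]
    simp
  obtain ⟨F, hF, hFe⟩ := h E hE hdeg
  have h1 : G.deg (fun v => D v - E v) = G.deg F := dequiv_deg hFe
  have h2 : 0 ≤ G.deg F := Finset.sum_nonneg fun v _ => hF v
  rw [deg_sub_fun, hdeg] at h1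
  linarith

lemma rank_ge_iff (v0 : G.V) (D : G.Divisor) (n : ℕ) :
    (n : ℤ) ≤ G.rank D ↔ G.RankGe D n := by
  unfold rank
  by_cases h0 : G.RankGe D 0
  · rw [if_pos h0]
    have hd0 : (0 : ℤ) ≤ G.deg D := rankGe_deg v0 h0
    have hbdd : BddAbove {k : ℕ | G.RankGe D k} := by
      refine ⟨(G.deg D).toNat, fun k hk => ?_⟩
      have := rankGe_deg v0 hk
      exact (Int.le_toNat hd0).2 this
    constructor
    · intro h
      have hn : n ≤ sSup {k : ℕ | G.RankGe D k} := by exact_mod_cast h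
      have hmem : sSup {k : ℕ | G.RankGe D k} ∈ {k : ℕ | G.RankGe D k} :=
        Nat.sSup_mem ⟨0, h0⟩ hbdd
      exact rankGe_anti v0 hmem hn
    · intro h
      have : n ≤ sSup {k : ℕ | G.RankGe D k} := le_csSup hbdd h
      exact_mod_cast this
  · rw [if_neg h0]
    constructor
    · intro h
      exfalso
      have : (0 : ℤ) ≤ (n : ℤ) := Int.ofNat_nonneg n
      linarith
    · intro h
      exact absurd (rankGe_anti v0 h (Nat.zero_le n)) h0

lemma rankGe_const (r : ℕ) : G.RankGe (fun _ => (r : ℤ)) r := by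
  intro E hE hdeg
  refine ⟨fun v => (r : ℤ) - E v, fun v => ?_, ⟨0, fun v => by simp⟩⟩
  have h1 : E v ≤ ∑ u, E u := Finset.single_le_sum (fun u _ => hE u) (Finset.mem_univ v)
  have h2 : ∑ u, E u = (r : ℤ) := hdeg
  dsimp only
  linarith

lemma dgonr_set_bddBelow (v0 : G.V) (r : ℕ) :
    BddBelow {d : ℤ | ∃ D : G.Divisor, (r : ℤ) ≤ G.rank D ∧ G.deg D = d} := by
  refine ⟨(r : ℤ), fun d hd => ?_⟩
  obtain ⟨D, hD, hdeg⟩ := hd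
  rw [← hdeg]
  exact rankGe_deg v0 ((rank_ge_iff v0 D r).1 hD)

lemma dgonr_set_nonempty (v0 : G.V) (r : ℕ) :
    Set.Nonempty {d : ℤ | ∃ D : G.Divisor, (r : ℤ) ≤ G.rank D ∧ G.deg D = d} :=
  ⟨G.deg (fun _ => (r : ℤ)), ⟨fun _ => (r : ℤ),
    (rank_ge_iff v0 _ r).2 (rankGe_const r), rfl⟩⟩

end Multigraph
/-! ## List helpers -/

section HeadD

variable {α : Type}

lemma headD_append_left (l l2 : List α) (h : l ≠ []) (d d' : α) :
    (l ++ l2).headD d = l.headD d' := by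
  cases l with
  | nil => exact absurd rfl h
  | cons a t => rfl

lemma headD_congr (l : List α) (h : l ≠ []) (d d' : α) : l.headD d = l.headD d' := by
  cases l with
  | nil => exact absurd rfl h
  | cons a t => rfl

end HeadD

section ListHelpers

variable {α : Type} [DecidableEq α]

/-- Sum over consecutive pairs of a list whose first component is `z`. -/
def Aval (f : α → ℤ) (z : α) (l : List α) : ℤ :=
  ((l.zip l.tail).map (fun p => if p.1 = z then f z - f p.2 else 0)).sum

lemma Aval_nil (f : α → ℤ) (z : α) : Aval f z [] = 0 := rfl

lemma Aval_single (f : α → ℤ) (z a : α) : Aval f z [a] = 0 := rfl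

lemma Aval_cons (f : α → ℤ) (z a b : α) (t : List α) :
    Aval f z (a :: b :: t) = (if a = z then f z - f b else 0) + Aval f z (b :: t) := by
  simp [Aval]

lemma Aval_cons' (f : α → ℤ) (z a : α) (l : List α) (h : l ≠ []) :
    Aval f z (a :: l) = (if a = z then f z - f (l.headD z) else 0) + Aval f z l := by
  cases l with
  | nil => exact absurd rfl h
  | cons b t => rw [Aval_cons]; rfl

lemma Aval_not_mem (f : α → ℤ) (z : α) : ∀ (l : List α), z ∉ l.dropLast → Aval f z l = 0
  | [], _ => rfl
  | [a], _ => rfl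
  | a :: b :: t, h => by
    have hd : (a :: b :: t).dropLast = a :: (b :: t).dropLast := rfl
    rw [hd] at h
    simp only [List.mem_cons, not_or] at h
    rw [Aval_cons, if_neg (fun hh => h.1 hh.symm),
      Aval_not_mem f z (b :: t) h.2]
    ring

lemma Aval_single_occ (f : α → ℤ) (z : α) :
    ∀ (l1 l2 : List α), l2 ≠ [] → z ∉ l1 → z ∉ l2.dropLast →
      Aval f z (l1 ++ z :: l2) = f z - f (l2.headD z)
  | [], l2, h2, _, h3 => by
    rw [List.nil_append, Aval_cons' f z z l2 h2, if_pos rfl,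
      Aval_not_mem f z l2 h3]
    ring
  | a :: l1, l2, h2, h1, h3 => by
    simp only [List.mem_cons, not_or] at h1
    rw [List.cons_append, Aval_cons' f z a (l1 ++ z :: l2) (by simp),
      if_neg (fun hh => h1.1 hh.symm),
      Aval_single_occ f z l1 l2 h2 h1.2 h3]
    ring

lemma count_pair_sum {β : Type} [DecidableEq β] [Fintype β] (f : β → ℤ) (z : β)
    (s : List (β × β)) :
    ∑ w, (s.count (z, w) : ℤ) * (f z - f w)
      = (s.map (fun p => if p.1 = z then f z - f p.2 else 0)).sum := by
  induction s with
  | nil => simp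
  | cons p t ih =>
    obtain ⟨p1, p2⟩ := p
    simp only [List.count_cons, List.map_cons, List.sum_cons, beq_iff_eq]
    push_cast
    have : ∀ w : β, ((t.count (z, w) : ℤ) + if (p1, p2) = (z, w) then 1 else 0) * (f z - f w)
        = (t.count (z, w) : ℤ) * (f z - f w)
          + (if (p1, p2) = (z, w) then 1 else 0) * (f z - f w) := fun w => by ring
    rw [Finset.sum_congr rfl fun w _ => this w, Finset.sum_add_distrib, ih]
    have h2 : ∑ w, (if (p1, p2) = (z, w) then 1 else 0) * (f z - f w)
        = if p1 = z then f z - f p2 else 0 := by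
      by_cases hz : p1 = z
      · subst hz
        rw [if_pos rfl]
        rw [Finset.sum_congr rfl (g := fun w => if w = p2 then f p1 - f w else 0)
          (fun w _ => by
            by_cases hw : w = p2
            · subst hw; simp
            · show _ = if w = p2 then _ else _
              rw [if_neg hw, if_neg (by simp [Prod.ext_iff]; intro h; exact absurd h.symm hw), zero_mul])]
        rw [Finset.sum_ite_eq' Finset.univ p2 (fun w => f p1 - f w)]
        simp
      · rw [if_neg hz]
        apply Finset.sum_eq_zero
        intro w _
        rw [if_neg (by simp [Prod.ext_iff]; intro h; exact absurd h hz), zero_mul]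
    rw [h2]
    ring

end ListHelpers
/-! ## The chain inequality -/

lemma chain_bound {α : Type} (f D : α → ℤ) (hD : ∀ w, 0 ≤ D w) :
    ∀ (l : List α) (a b : α),
      (∀ (p q : List α) (w : α), l = p ++ w :: q →
        (f w - f ((p.reverse ++ [a]).headD w)) + (f w - f ((q ++ [b]).headD w)) ≤ D w) →
      f a - f b ≤ ((l.length : ℤ) + 1) * (f a - f ((l ++ [b]).headD b))
        + (l.length : ℤ) * ((l.map D).sum)
  | [], a, b, _ => by simp
  | w :: t, a, b, h => by
    have h0 := h [] t w rfl
    simp only [List.reverse_nil, List.nil_append, List.headD_cons] at h0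
    -- h0 : f w - f a + (f w - f ((t ++ [b]).headD w)) ≤ D w
    have hIH := chain_bound f D hD t w b (fun p q w' hpq => by
      have hh := h (w :: p) q w' (by rw [hpq]; rfl)
      rw [List.reverse_cons] at hh
      rwa [headD_append_left (p.reverse ++ [w]) [a] (by simp) w' a,
        headD_congr (p.reverse ++ [w]) (by simp) a w'] at hh)
    have hHB : ((t ++ [b]).headD w) = ((t ++ [b]).headD b) :=
      headD_congr (t ++ [b]) (by simp) w b
    rw [hHB] at h0
    have hc : 0 ≤ (t.map D).sum := by
      apply List.sum_nonneg
      intro x hx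
      obtain ⟨y, _, rfl⟩ := List.mem_map.1 hx
      exact hD y
    have hDw := hD w
    have hn0 : (0 : ℤ) ≤ (t.length : ℤ) := Int.ofNat_nonneg _
    have key : ((t.length : ℤ) + 1) * (f w - f ((t ++ [b]).headD b))
        ≤ ((t.length : ℤ) + 1) * (D w + (f a - f w)) :=
      mul_le_mul_of_nonneg_left (by linarith) (by linarith)
    have hgoal : ((w :: t) ++ [b]).headD b = w := rfl
    rw [hgoal]
    simp only [List.length_cons, List.map_cons, List.sum_cons]
    push_cast
    nlinarith [hIH, key, hc, hDw, hn0]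
/-! ## Subdivision computations -/

namespace Subdivision

variable {G H : Multigraph} (S : Subdivision G H)

lemma ne_of_fin {u v : G.V} (j : Fin (G.m u v)) : u ≠ v := by
  rintro rfl
  have h1 := j.isLt
  have h2 := G.loopless u
  omega

lemma path_eq_of {u v u0 v0 : G.V} {j : Fin (G.m u v)} {j0 : Fin (G.m u0 v0)}
    (hu : u = u0) (hv : v = v0) (hj : (j : ℕ) = (j0 : ℕ)) :
    S.path u v j = S.path u0 v0 j0 := by
  subst hu; subst hv
  congr 1
  exact Fin.ext hj

lemma path_eq_rev_of {u v u0 v0 : G.V} {j : Fin (G.m u v)} {j0 : Fin (G.m u0 v0)}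
    (hu : u = v0) (hv : v = u0) (hj : (j : ℕ) = (j0 : ℕ)) :
    S.path u v j = (S.path u0 v0 j0).reverse := by
  have h := S.rev u0 v0 j0
  subst hu; subst hv
  rw [← h]
  congr 1
  exact Fin.ext (by simpa using hj)

lemma fresh' {u v : G.V} {j : Fin (G.m u v)} {x : H.V} (hx : x ∈ S.path u v j) (w : G.V) :
    x ≠ S.emb w := fun h => S.fresh u v j x hx ⟨w, h.symm⟩

/-- The successor of `emb u` on the path towards `v` (the `j`-th edge). -/
def nxt (u v : G.V) (j : Fin (G.m u v)) : H.V :=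
  (S.path u v j ++ [S.emb v]).headD (S.emb v)

lemma lapl_eq_Asum (f : H.V → ℤ) (z : H.V) :
    ∑ w, (H.m z w : ℤ) * (f z - f w)
      = ∑ u, ∑ v, ∑ j : Fin (G.m u v),
          Aval f z (S.emb u :: (S.path u v j ++ [S.emb v])) := by
  have h1 : ∀ w, (H.m z w : ℤ) * (f z - f w)
      = ∑ u, ∑ v, ∑ j : Fin (G.m u v),
          (adjCount z w (S.emb u :: (S.path u v j ++ [S.emb v])) : ℤ) * (f z - f w) := by
    intro w
    rw [S.edges z w]
    push_cast
    rw [Finset.sum_mul]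
    refine Finset.sum_congr rfl fun u _ => ?_
    rw [Finset.sum_mul]
    refine Finset.sum_congr rfl fun v _ => ?_
    rw [Finset.sum_mul]
  rw [Finset.sum_congr rfl fun w _ => h1 w]
  rw [Finset.sum_comm]
  refine Finset.sum_congr rfl fun u _ => ?_
  rw [Finset.sum_comm]
  refine Finset.sum_congr rfl fun v _ => ?_
  rw [Finset.sum_comm]
  refine Finset.sum_congr rfl fun j _ => ?_
  exact count_pair_sum f z _

lemma Aval_branch (f : H.V → ℤ) (v0 u v : G.V) (j : Fin (G.m u v)) :
    Aval f (S.emb v0) (S.emb u :: (S.path u v j ++ [S.emb v]))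
      = if u = v0 then f (S.emb v0) - f (S.nxt u v j) else 0 := by
  by_cases h : u = v0
  · subst h
    rw [if_pos rfl]
    rw [Aval_cons' f (S.emb u) (S.emb u) (S.path u v j ++ [S.emb v]) (by simp), if_pos rfl]
    rw [Aval_not_mem f (S.emb u) (S.path u v j ++ [S.emb v]) (by
      rw [List.dropLast_concat]
      intro hmem
      exact S.fresh u v j _ hmem ⟨u, rfl⟩)]
    rw [add_zero, headD_congr (S.path u v j ++ [S.emb v]) (by simp) (S.emb u) (S.emb v)]
    rfl
  · rw [if_neg h]
    apply Aval_not_mem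
    have hdl : (S.emb u :: (S.path u v j ++ [S.emb v])).dropLast
        = S.emb u :: S.path u v j := by
      rw [← List.cons_append, List.dropLast_concat]
    rw [hdl]
    intro hmem
    rcases List.mem_cons.1 hmem with h1 | h1
    · exact h (S.inj h1.symm)
    · exact S.fresh u v j _ h1 ⟨v0, rfl⟩

lemma lapl_branch (f : H.V → ℤ) (v0 : G.V) :
    ∑ w, (H.m (S.emb v0) w : ℤ) * (f (S.emb v0) - f w)
      = ∑ v, ∑ j : Fin (G.m v0 v), (f (S.emb v0) - f (S.nxt v0 v j)) := by
  rw [S.lapl_eq_Asum f (S.emb v0)]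
  rw [Finset.sum_congr rfl fun u _ => Finset.sum_congr rfl fun v _ =>
    Finset.sum_congr rfl fun j _ => S.Aval_branch f v0 u v j]
  rw [Finset.sum_eq_single v0]
  · exact Finset.sum_congr rfl fun v _ => Finset.sum_congr rfl fun j _ => if_pos rfl
  · intro u _ hu
    exact Finset.sum_eq_zero fun v _ => Finset.sum_eq_zero fun j _ => if_neg hu
  · intro h
    exact absurd (Finset.mem_univ v0) h

lemma triple_sum {M : Type} [AddCommMonoid M] (a b : G.V) (c : ℕ) (hc : c < G.m a b) (t : M) :
    ∑ u, ∑ v, ∑ j : Fin (G.m u v),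
        (if u = a ∧ v = b ∧ (j : ℕ) = c then t else 0) = t := by
  rw [Finset.sum_eq_single a]
  · rw [Finset.sum_eq_single b]
    · rw [Finset.sum_eq_single (⟨c, hc⟩ : Fin (G.m a b))]
      · rw [if_pos ⟨rfl, rfl, rfl⟩]
      · intro j _ hj
        exact if_neg (fun hh => hj (Fin.ext hh.2.2))
      · intro h; exact absurd (Finset.mem_univ (⟨c, hc⟩ : Fin (G.m a b))) h
    · intro v _ hv
      exact Finset.sum_eq_zero fun j _ => if_neg (fun hh => hv hh.2.1)
    · intro h; exact absurd (Finset.mem_univ b) h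
  · intro u _ hu
    exact Finset.sum_eq_zero fun v _ => Finset.sum_eq_zero fun j _ => if_neg (fun hh => hu hh.1)
  · intro h; exact absurd (Finset.mem_univ a) h

lemma split_facts {u0 v0 : G.V} {j0 : Fin (G.m u0 v0)} {p q : List H.V} {z : H.V}
    (hsplit : S.path u0 v0 j0 = p ++ z :: q) :
    z ∉ p ∧ z ∉ q ∧ z ∈ S.path u0 v0 j0 := by
  have hnd := S.nodup u0 v0 j0
  rw [hsplit] at hnd
  rw [List.nodup_append] at hnd
  refine ⟨fun hz => hnd.2.2 z hz z List.mem_cons_self rfl, ?_, by rw [hsplit]; simp⟩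
  have := hnd.2.1
  rw [List.nodup_cons] at this
  exact this.1

lemma Aval_interior (f : H.V → ℤ) {u0 v0 : G.V} {j0 : Fin (G.m u0 v0)}
    {p q : List H.V} {z : H.V} (hsplit : S.path u0 v0 j0 = p ++ z :: q)
    (u v : G.V) (j : Fin (G.m u v)) :
    Aval f z (S.emb u :: (S.path u v j ++ [S.emb v]))
      = (if u = u0 ∧ v = v0 ∧ (j : ℕ) = (j0 : ℕ)
          then f z - f ((q ++ [S.emb v0]).headD z) else 0)
        + (if u = v0 ∧ v = u0 ∧ (j : ℕ) = (j0 : ℕ)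
          then f z - f ((p.reverse ++ [S.emb u0]).headD z) else 0) := by
  obtain ⟨hzp, hzq, hzmem⟩ := S.split_facts hsplit
  have hne := ne_of_fin j0
  by_cases hz : z ∈ S.path u v j
  · rcases S.disj u v j u0 v0 j0 z hz hzmem with ⟨hu, hv, hj⟩ | ⟨hu, hv, hj⟩
    · have hpath : S.path u v j = p ++ z :: q := by
        rw [S.path_eq_of hu hv hj, hsplit]
      rw [if_pos ⟨hu, hv, hj⟩, if_neg (by
        rintro ⟨hu2, hv2, -⟩
        exact hne (hu.symm.trans hu2))]
      rw [add_zero, hpath]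
      have hl : S.emb u :: ((p ++ z :: q) ++ [S.emb v])
          = (S.emb u :: p) ++ z :: (q ++ [S.emb v]) := by simp
      rw [hl, Aval_single_occ f z (S.emb u :: p) (q ++ [S.emb v]) (by simp)
        (by
          intro hmem
          rcases List.mem_cons.1 hmem with h1 | h1
          · exact S.fresh u0 v0 j0 z hzmem ⟨u, h1.symm⟩
          · exact hzp h1)
        (by rw [List.dropLast_concat]; exact hzq)]
      rw [hv]
    · have hpath : S.path u v j = q.reverse ++ z :: p.reverse := by
        rw [S.path_eq_rev_of hu hv hj, hsplit]
        simp
      rw [if_neg (by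
        rintro ⟨hu2, hv2, -⟩
        exact hne (hu2.symm.trans hu)), if_pos ⟨hu, hv, hj⟩]
      rw [zero_add, hpath]
      have hl : S.emb u :: ((q.reverse ++ z :: p.reverse) ++ [S.emb v])
          = (S.emb u :: q.reverse) ++ z :: (p.reverse ++ [S.emb v]) := by simp
      rw [hl, Aval_single_occ f z (S.emb u :: q.reverse) (p.reverse ++ [S.emb v]) (by simp)
        (by
          intro hmem
          rcases List.mem_cons.1 hmem with h1 | h1
          · exact S.fresh u0 v0 j0 z hzmem ⟨u, h1.symm⟩
          · exact hzq (List.mem_reverse.1 h1))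
        (by rw [List.dropLast_concat]; intro h1; exact hzp (List.mem_reverse.1 h1))]
      rw [hv]
  · rw [if_neg, if_neg, add_zero]
    · apply Aval_not_mem
      have hdl : (S.emb u :: (S.path u v j ++ [S.emb v])).dropLast
          = S.emb u :: S.path u v j := by
        rw [← List.cons_append, List.dropLast_concat]
      rw [hdl]
      intro hmem
      rcases List.mem_cons.1 hmem with h1 | h1
      · exact S.fresh u0 v0 j0 z hzmem ⟨u, h1.symm⟩
      · exact hz h1
    · rintro ⟨hu, hv, hj⟩
      apply hz
      rw [S.path_eq_rev_of hu hv hj, List.mem_reverse]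
      exact hzmem
    · rintro ⟨hu, hv, hj⟩
      apply hz
      rw [S.path_eq_of hu hv hj]
      exact hzmem

lemma lapl_interior (f : H.V → ℤ) {u0 v0 : G.V} {j0 : Fin (G.m u0 v0)}
    {p q : List H.V} {z : H.V} (hsplit : S.path u0 v0 j0 = p ++ z :: q) :
    ∑ w, (H.m z w : ℤ) * (f z - f w)
      = (f z - f ((q ++ [S.emb v0]).headD z))
        + (f z - f ((p.reverse ++ [S.emb u0]).headD z)) := by
  rw [S.lapl_eq_Asum f z]
  rw [Finset.sum_congr rfl fun u _ => Finset.sum_congr rfl fun v _ =>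
    Finset.sum_congr rfl fun j _ => S.Aval_interior f hsplit u v j]
  rw [Finset.sum_congr rfl fun u _ => Finset.sum_congr rfl fun v _ =>
    Finset.sum_add_distrib]
  rw [Finset.sum_congr rfl fun u _ => Finset.sum_add_distrib, Finset.sum_add_distrib]
  rw [triple_sum u0 v0 (j0 : ℕ) j0.isLt _,
    triple_sum v0 u0 (j0 : ℕ) (G.symm u0 v0 ▸ j0.isLt) _]

end Subdivision
/-! ## Pushforward and degree bookkeeping -/

section Count

variable {β : Type} [DecidableEq β] [Fintype β]

lemma list_sum_eq_count (D : β → ℤ) (l : List β) :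
    (l.map D).sum = ∑ x, (l.count x : ℤ) * D x := by
  induction l with
  | nil => simp
  | cons a t ih =>
    simp only [List.map_cons, List.sum_cons, List.count_cons, beq_iff_eq]
    push_cast
    have : ∀ x : β, ((t.count x : ℤ) + if a = x then 1 else 0) * D x
        = (t.count x : ℤ) * D x + (if x = a then D x else 0) := by
      intro x
      by_cases hx : x = a
      · subst hx; rw [if_pos rfl, if_pos rfl]; ring
      · rw [if_neg (fun hh => hx hh.symm), if_neg hx]; ring
    rw [Finset.sum_congr rfl fun x _ => this x, Finset.sum_add_distrib, ← ih,
      Finset.sum_ite_eq' Finset.univ a D, if_pos (Finset.mem_univ a)]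
    ring

end Count

namespace Subdivision

variable {G H : Multigraph} (S : Subdivision G H)

/-- Pullback of a divisor on `G` to the subdivision. -/
def iota (E : G.Divisor) : H.Divisor := fun x => ∑ v, if x = S.emb v then E v else 0

lemma iota_emb (E : G.Divisor) (v : G.V) : S.iota E (S.emb v) = E v := by
  unfold iota
  rw [Finset.sum_eq_single v]
  · rw [if_pos rfl]
  · intro u _ hu
    exact if_neg (fun hh => hu (S.inj hh.symm))
  · intro h; exact absurd (Finset.mem_univ v) h

lemma iota_not_range {x : H.V} (hx : x ∉ Set.range S.emb) (E : G.Divisor) :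
    S.iota E x = 0 := by
  unfold iota
  exact Finset.sum_eq_zero fun v _ => if_neg (fun hh => hx ⟨v, hh.symm⟩)

lemma iota_eff (E : G.Divisor) (hE : G.Effective E) : H.Effective (S.iota E) := by
  intro x
  unfold iota
  refine Finset.sum_nonneg fun v _ => ?_
  split
  · exact hE v
  · exact le_refl 0

lemma iota_deg (E : G.Divisor) : H.deg (S.iota E) = G.deg E := by
  unfold Multigraph.deg iota
  rw [Finset.sum_comm]
  refine Finset.sum_congr rfl fun v _ => ?_
  rw [Finset.sum_ite_eq' Finset.univ (S.emb v) (fun _ => E v), if_pos (Finset.mem_univ _)]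

lemma sum_count_paths (x : H.V) (hx : x ∉ Set.range S.emb) :
    ∑ v, ∑ u, ∑ j : Fin (G.m v u), ((S.path v u j).count x : ℤ) = 2 := by
  obtain ⟨u0, v0, j0, hmem⟩ := (S.cover x).resolve_left hx
  obtain ⟨p, q, hsplit⟩ := List.append_of_mem hmem
  have hne := ne_of_fin j0
  have key : ∀ v u (j : Fin (G.m v u)), ((S.path v u j).count x : ℤ)
      = (if v = u0 ∧ u = v0 ∧ (j : ℕ) = (j0 : ℕ) then 1 else 0)
        + (if v = v0 ∧ u = u0 ∧ (j : ℕ) = (j0 : ℕ) then 1 else 0) := by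
    intro v u j
    by_cases hmem2 : x ∈ S.path v u j
    · have h1 : (S.path v u j).count x = 1 := List.count_eq_one_of_mem (S.nodup v u j) hmem2
      rcases S.disj v u j u0 v0 j0 x hmem2 hmem with ⟨ha, hb, hc⟩ | ⟨ha, hb, hc⟩
      · rw [h1, if_pos ⟨ha, hb, hc⟩, if_neg (by
          rintro ⟨ha2, -, -⟩
          exact hne (ha.symm.trans ha2))]
        norm_num
      · rw [h1, if_neg (by
          rintro ⟨ha2, -, -⟩
          exact hne (ha2.symm.trans ha)), if_pos ⟨ha, hb, hc⟩]
        norm_num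
    · rw [List.count_eq_zero_of_not_mem hmem2, if_neg, if_neg]
      · norm_num
      · rintro ⟨ha, hb, hc⟩
        apply hmem2
        rw [S.path_eq_rev_of ha hb hc, List.mem_reverse]
        exact hmem
      · rintro ⟨ha, hb, hc⟩
        apply hmem2
        rw [S.path_eq_of ha hb hc]
        exact hmem
  rw [Finset.sum_congr rfl fun v _ => Finset.sum_congr rfl fun u _ =>
    Finset.sum_congr rfl fun j _ => key v u j]
  rw [Finset.sum_congr rfl fun v _ => Finset.sum_congr rfl fun u _ =>
    Finset.sum_add_distrib]
  rw [Finset.sum_congr rfl fun v _ => Finset.sum_add_distrib, Finset.sum_add_distrib]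
  rw [triple_sum u0 v0 (j0 : ℕ) j0.isLt (1 : ℤ),
    triple_sum v0 u0 (j0 : ℕ) (G.symm u0 v0 ▸ j0.isLt) (1 : ℤ)]
  norm_num

lemma count_zero_of_range {x : H.V} (hx : x ∈ Set.range S.emb) (v u : G.V)
    (j : Fin (G.m v u)) : ((S.path v u j).count x : ℤ) = 0 := by
  rw [List.count_eq_zero_of_not_mem (fun hmem => S.fresh v u j x hmem hx)]
  norm_num

lemma deg_pushforward (D0 : H.Divisor) :
    G.deg (fun v => D0 (S.emb v) + ∑ u, ∑ j : Fin (G.m v u), ((S.path v u j).map D0).sum)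
      = 2 * H.deg D0 - ∑ v, D0 (S.emb v) := by
  classical
  unfold Multigraph.deg
  rw [Finset.sum_add_distrib]
  set B : Finset H.V := Finset.univ.image S.emb with hB
  have hmemB : ∀ x : H.V, x ∈ B ↔ x ∈ Set.range S.emb := by
    intro x
    simp [hB, Set.mem_range, eq_comm]
  have hBsum : ∑ x ∈ B, D0 x = ∑ v, D0 (S.emb v) := by
    rw [hB]
    exact Finset.sum_image fun a _ b _ hab => S.inj hab
  have hT : ∑ v, ∑ u, ∑ j : Fin (G.m v u), ((S.path v u j).map D0).sum
      = 2 * ∑ x ∈ Bᶜ, D0 x := by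
    rw [Finset.sum_congr rfl fun v _ => Finset.sum_congr rfl fun u _ =>
      Finset.sum_congr rfl fun j _ => list_sum_eq_count D0 (S.path v u j)]
    rw [Finset.sum_congr rfl fun v _ => Finset.sum_congr rfl fun u _ =>
      Finset.sum_comm]
    rw [Finset.sum_congr rfl fun v _ => Finset.sum_comm]
    rw [Finset.sum_comm]
    have hper : ∀ x : H.V, ∑ v, ∑ u, ∑ j : Fin (G.m v u), ((S.path v u j).count x : ℤ) * D0 x
        = (∑ v, ∑ u, ∑ j : Fin (G.m v u), ((S.path v u j).count x : ℤ)) * D0 x := by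
      intro x
      rw [Finset.sum_mul]
      refine Finset.sum_congr rfl fun v _ => ?_
      rw [Finset.sum_mul]
      refine Finset.sum_congr rfl fun u _ => ?_
      rw [Finset.sum_mul]
    rw [Finset.sum_congr rfl fun x _ => hper x]
    rw [← Finset.sum_add_sum_compl B
      (fun x => (∑ v, ∑ u, ∑ j : Fin (G.m v u), ((S.path v u j).count x : ℤ)) * D0 x)]
    have hBzero : ∑ x ∈ B, (∑ v, ∑ u, ∑ j : Fin (G.m v u), ((S.path v u j).count x : ℤ)) * D0 x
        = 0 := by
      refine Finset.sum_eq_zero fun x hxB => ?_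
      have hx : x ∈ Set.range S.emb := (hmemB x).1 hxB
      rw [Finset.sum_congr rfl fun v _ => Finset.sum_congr rfl fun u _ =>
        Finset.sum_congr rfl fun j _ => S.count_zero_of_range hx v u j]
      simp
    have hBc : ∑ x ∈ Bᶜ, (∑ v, ∑ u, ∑ j : Fin (G.m v u), ((S.path v u j).count x : ℤ)) * D0 x
        = ∑ x ∈ Bᶜ, 2 * D0 x := by
      refine Finset.sum_congr rfl fun x hxB => ?_
      have hx : x ∉ Set.range S.emb := by
        rw [Finset.mem_compl] at hxB
        exact fun hh => hxB ((hmemB x).2 hh)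
      rw [S.sum_count_paths x hx]
    rw [hBzero, hBc, zero_add, ← Finset.mul_sum]
  have htot : ∑ x, D0 x = ∑ x ∈ B, D0 x + ∑ x ∈ Bᶜ, D0 x :=
    (Finset.sum_add_sum_compl B D0).symm
  rw [hBsum] at htot
  linarith [hT, htot]

end Subdivision
/-- For a connected loopless multigraph `G` and `r ≥ 1`, for every `k ≥ 1`
one has `dgon_r(G) ≤ 2 · dgon_r(σ_k(G)) − r`. -/
theorem dgonr_le_two_mul_dgonr_subdivision_sub
    (G : Multigraph) (hG : G.Connected) (r : ℕ) (hr : 1 ≤ r) :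
    ∀ k : ℕ, 1 ≤ k → ∀ H : Multigraph, IsRegularSubdivision k G H →
      G.dgonr r ≤ 2 * H.dgonr r - r := by
  intro k hk H hreg
  obtain ⟨S, hlen⟩ := hreg
  obtain ⟨q⟩ := hG.1
  have hkz : (0 : ℤ) < (k : ℤ) := by exact_mod_cast hk
  -- the gonality of H is attained
  have hSHne := Multigraph.dgonr_set_nonempty (G := H) (S.emb q) r
  have hSHbdd := Multigraph.dgonr_set_bddBelow (G := H) (S.emb q) r
  have hmin : sInf {d : ℤ | ∃ D : H.Divisor, (r : ℤ) ≤ H.rank D ∧ H.deg D = d}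
      ∈ {d : ℤ | ∃ D : H.Divisor, (r : ℤ) ≤ H.rank D ∧ H.deg D = d} :=
    Int.csInf_mem hSHne hSHbdd
  obtain ⟨D, hDrank, hDdeg⟩ := hmin
  have hD : H.RankGe D r := (Multigraph.rank_ge_iff (S.emb q) D r).1 hDrank
  -- normalize D so that it is effective with at least r chips on `emb q`
  set E0 : H.Divisor := fun x => if x = S.emb q then (r : ℤ) else 0 with hE0def
  have hE0eff : H.Effective E0 := by
    intro v
    rw [hE0def]
    dsimp only
    split
    · exact_mod_cast Nat.zero_le r
    · exact le_refl 0
  have hE0q : E0 (S.emb q) = (r : ℤ) := by simp [hE0def]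
  have hE0deg : H.deg E0 = (r : ℤ) := by
    unfold Multigraph.deg
    rw [hE0def]
    rw [Finset.sum_ite_eq' Finset.univ (S.emb q) (fun _ => (r : ℤ))]
    rw [if_pos (Finset.mem_univ _)]
  obtain ⟨F, hFeff, hFequiv⟩ := hD E0 hE0eff hE0deg
  set D0 : H.Divisor := fun x => F x + E0 x with hD0def
  have hD0x : ∀ x, D0 x = F x + E0 x := fun x => by rw [hD0def]
  have hDD0 : H.DEquiv D D0 := by
    obtain ⟨y, hy⟩ := hFequiv
    refine ⟨y, fun v => ?_⟩
    have h1 : (D v - E0 v) - F v = ∑ u, (H.m v u : ℤ) * (y v - y u) := hy v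
    have h2 : D v - D0 v = (D v - E0 v) - F v := by rw [hD0x v]; ring
    show D v - D0 v = _
    rw [h2, h1]
  have hD0eff : H.Effective D0 := by
    intro v
    rw [hD0x v]
    have := hFeff v
    have := hE0eff v
    linarith
  have hD0rank : H.RankGe D0 r := Multigraph.rankGe_congr hDD0 hD
  have hD0deg : H.deg D0 = H.deg D := by
    have h1 : H.deg (fun v => D v - E0 v) = H.deg F := Multigraph.dequiv_deg hFequiv
    rw [Multigraph.deg_sub_fun, hE0deg] at h1
    have h2 : H.deg D0 = H.deg F + H.deg E0 := by
      unfold Multigraph.deg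
      rw [Finset.sum_congr rfl fun v _ => hD0x v]
      exact Finset.sum_add_distrib
    rw [h2, hE0deg]
    linarith
  have hbranch_ge : (r : ℤ) ≤ ∑ v, D0 (S.emb v) := by
    have h2 : (r : ℤ) ≤ D0 (S.emb q) := by
      rw [hD0x, hE0q]
      have := hFeff (S.emb q)
      linarith
    calc (r : ℤ) ≤ D0 (S.emb q) := h2
      _ ≤ ∑ v, D0 (S.emb v) :=
        Finset.single_le_sum (fun v _ => hD0eff (S.emb v)) (Finset.mem_univ q)
  -- the pushforward divisor on G
  set D' : G.Divisor := fun v =>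
    D0 (S.emb v) + ∑ u, ∑ j : Fin (G.m v u), ((S.path v u j).map D0).sum with hD'def
  have hD'v : ∀ v, D' v
      = D0 (S.emb v) + ∑ u, ∑ j : Fin (G.m v u), ((S.path v u j).map D0).sum :=
    fun v => by rw [hD'def]
  have hD'deg : G.deg D' = 2 * H.deg D0 - ∑ v, D0 (S.emb v) := by
    rw [hD'def]
    exact S.deg_pushforward D0
  -- D' has rank at least r
  have hrank' : G.RankGe D' r := by
    intro E hE hdegE
    have hiE : H.Effective (S.iota E) := S.iota_eff E hE
    have hiEdeg : H.deg (S.iota E) = (r : ℤ) := by rw [S.iota_deg]; exact hdegE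
    obtain ⟨F', hF', hFe'⟩ := hD0rank (S.iota E) hiE hiEdeg
    obtain ⟨f, hf⟩ := hFe'
    set x : G.V → ℤ := fun v => (f (S.emb v)) / (k : ℤ) with hxdef
    have hxv : ∀ v, x v = (f (S.emb v)) / (k : ℤ) := fun v => by rw [hxdef]
    refine ⟨fun v => (D' v - E v) - ∑ u, (G.m v u : ℤ) * (x v - x u), ?_, ⟨x, fun v => ?_⟩⟩
    · -- effectivity
      intro v0
      have hEb : (D0 (S.emb v0) - E v0) - F' (S.emb v0)
          = ∑ w, (H.m (S.emb v0) w : ℤ) * (f (S.emb v0) - f w) := by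
        have h1 : (D0 (S.emb v0) - S.iota E (S.emb v0)) - F' (S.emb v0)
            = ∑ w, (H.m (S.emb v0) w : ℤ) * (f (S.emb v0) - f w) := hf (S.emb v0)
        rwa [S.iota_emb E v0] at h1
      have hlapl := S.lapl_branch f v0
      -- the key per-edge inequality
      have key : ∀ u (j : Fin (G.m v0 u)), x v0 - x u
          ≤ (f (S.emb v0) - f (S.nxt v0 u j)) + ((S.path v0 u j).map D0).sum := by
        intro u j
        have hchain_hyp : ∀ (p q2 : List H.V) (w : H.V), S.path v0 u j = p ++ w :: q2 →
            (f w - f ((p.reverse ++ [S.emb v0]).headD w))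
              + (f w - f ((q2 ++ [S.emb u]).headD w)) ≤ D0 w := by
          intro p q2 w hpq
          have h2 := S.lapl_interior f hpq
          have h3 : (D0 w - S.iota E w) - F' w
              = ∑ w2, (H.m w w2 : ℤ) * (f w - f w2) := hf w
          have h4 : S.iota E w = 0 :=
            S.iota_not_range (S.fresh _ _ _ w (by rw [hpq]; simp)) E
          have h5 := hF' w
          rw [h4, h2] at h3
          linarith
        have hch := chain_bound f D0 hD0eff (S.path v0 u j) (S.emb v0) (S.emb u) hchain_hyp
        have hnxt : (S.path v0 u j ++ [S.emb u]).headD (S.emb u) = S.nxt v0 u j := rfl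
        rw [hnxt] at hch
        have hl : ((S.path v0 u j).length : ℤ) = (k : ℤ) - 1 := by
          rw [hlen v0 u j, Nat.cast_sub hk, Nat.cast_one]
        rw [hl] at hch
        have hc0 : 0 ≤ ((S.path v0 u j).map D0).sum := by
          apply List.sum_nonneg
          intro y hy
          obtain ⟨w, _, rfl⟩ := List.mem_map.1 hy
          exact hD0eff w
        set g : ℤ := f (S.emb v0) - f (S.nxt v0 u j) with hgdef
        set c : ℤ := ((S.path v0 u j).map D0).sum with hcdef
        have hineq : f (S.emb v0) ≤ f (S.emb u) + (g + c) * (k : ℤ) := by nlinarith [hch, hc0]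
        have hdiv : (f (S.emb v0)) / (k : ℤ) ≤ (f (S.emb u)) / (k : ℤ) + (g + c) := by
          have h6 : (f (S.emb v0)) / (k : ℤ) ≤ (f (S.emb u) + (g + c) * (k : ℤ)) / (k : ℤ) :=
            Int.ediv_le_ediv hkz hineq
          rwa [Int.add_mul_ediv_right _ _ (ne_of_gt hkz)] at h6
        rw [hxv v0, hxv u]
        linarith
      have hsum1 : ∑ u, (G.m v0 u : ℤ) * (x v0 - x u)
          = ∑ u, ∑ _j : Fin (G.m v0 u), (x v0 - x u) := by
        refine Finset.sum_congr rfl fun u _ => ?_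
        rw [Finset.sum_const, Finset.card_univ, Fintype.card_fin, nsmul_eq_mul]
      have hsum2 : ∑ u, ∑ _j : Fin (G.m v0 u), (x v0 - x u)
          ≤ ∑ u, ∑ j : Fin (G.m v0 u),
              ((f (S.emb v0) - f (S.nxt v0 u j)) + ((S.path v0 u j).map D0).sum) :=
        Finset.sum_le_sum fun u _ => Finset.sum_le_sum fun j _ => key u j
      have hsum3 : ∑ u, ∑ j : Fin (G.m v0 u),
            ((f (S.emb v0) - f (S.nxt v0 u j)) + ((S.path v0 u j).map D0).sum)
          = (∑ u, ∑ j : Fin (G.m v0 u), (f (S.emb v0) - f (S.nxt v0 u j)))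
            + ∑ u, ∑ j : Fin (G.m v0 u), ((S.path v0 u j).map D0).sum := by
        rw [← Finset.sum_add_distrib]
        exact Finset.sum_congr rfl fun u _ => Finset.sum_add_distrib
      have hF'v := hF' (S.emb v0)
      have hgoal : D' v0 = D0 (S.emb v0)
          + ∑ u, ∑ j : Fin (G.m v0 u), ((S.path v0 u j).map D0).sum := hD'v v0
      show (0 : ℤ) ≤ (D' v0 - E v0) - ∑ u, (G.m v0 u : ℤ) * (x v0 - x u)
      rw [hgoal, hsum1]
      linarith [hsum2, hsum3, hEb, hlapl, hF'v]
    · -- principality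
      show (D' v - E v) - ((D' v - E v) - ∑ u, (G.m v u : ℤ) * (x v - x u))
        = ∑ u, (G.m v u : ℤ) * (x v - x u)
      ring
  -- conclusion
  have hmem' : G.deg D' ∈ {d : ℤ | ∃ DD : G.Divisor, (r : ℤ) ≤ G.rank DD ∧ G.deg DD = d} :=
    ⟨D', (Multigraph.rank_ge_iff q D' r).2 hrank', rfl⟩
  have hle : G.dgonr r ≤ G.deg D' :=
    csInf_le (Multigraph.dgonr_set_bddBelow q r) hmem'
  have hgon : H.dgonr r
      = sInf {d : ℤ | ∃ D : H.Divisor, (r : ℤ) ≤ H.rank D ∧ H.deg D = d} := rfl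
  calc G.dgonr r ≤ G.deg D' := hle
    _ = 2 * H.deg D0 - ∑ v, D0 (S.emb v) := hD'deg
    _ ≤ 2 * H.dgonr r - r := by
        rw [hgon, ← hDdeg, ← hD0deg]
        linarith [hbranch_ge]
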